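/- Let τ belong to class 𝒯. Then the set S = ⋃_{n=0}^∞ τ^{-n}({a_i, b_i : i = 1, 2, …}) of all preimages under iterates of τ of the partition endpoints is dense in [0,1]. -/

import Mathlib

open Set Filter MeasureTheory Topology

/-!
If a nondegenerate interval `[x, y] ⊆ [0, 1]` contained no preimage of an endpoint, each iterate
`τⁿ` would map it onto an interval `[xₙ, yₙ]` inside a single branch `(a_{iₙ}, b_{iₙ})`. Convexity
of that branch together with `τ(a_{iₙ}⁺) = 0` gives `τ yₙ (yₙ - xₙ) ≤ (yₙ - a_{iₙ}) (τ yₙ - τ xₙ)`,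
i.e. the relative length `(yₙ - xₙ) / yₙ ≤ 1` is multiplied at least by `yₙ / (yₙ - a_{iₙ})` at each
step; hence `a_{iₙ} / yₙ → 0`. Branches whose left endpoint is close to `0` expand by a fixed factor
`ρ > 1` at their left endpoint: only finitely many `τ'(aᵢ)` are `≤ ρ` since `∑ 1 / τ'(aᵢ) < ∞`, and
a branch starting at `0` is expanding by (2.3) (if `0` is a limit point of the `aᵢ`, no branch
starts at `0`). So `yₙ₊₁ ≥ c yₙ` eventually for some `c > 1`, contradicting `yₙ ≤ 1`.
-/

structure PCT where
  τ : ℝ → ℝ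
  a : ℕ → ℝ
  b : ℕ → ℝ
  da : ℕ → ℝ
  maps_to : Set.MapsTo τ (Set.Icc 0 1) (Set.Icc 0 1)
  lt : ∀ i, a i < b i
  sub : ∀ i, Set.Ioo (a i) (b i) ⊆ Set.Icc (0:ℝ) 1
  disj : Pairwise (Function.onFun Disjoint fun i => Set.Ioo (a i) (b i))
  null : volume (Set.Icc (0:ℝ) 1 \ ⋃ i, Set.Ioo (a i) (b i)) = 0
  mono : ∀ i, StrictMonoOn τ (Set.Ioo (a i) (b i))
  conv : ∀ i, ConvexOn ℝ (Set.Ioo (a i) (b i)) τ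
  diff : ∀ i, ∀ x ∈ Set.Ioo (a i) (b i), DifferentiableAt ℝ τ x
  lim_zero : ∀ i, Filter.Tendsto τ (nhdsWithin (a i) (Set.Ioi (a i))) (nhds 0)
  deriv_lim : ∀ i, Filter.Tendsto (deriv τ) (nhdsWithin (a i) (Set.Ioi (a i))) (nhds (da i))
  da_pos : ∀ i, 0 < da i
  sum_inv : Summable (fun i => 1 / da i)
  expand : (¬ AccPt (0:ℝ) (Filter.principal (Set.range a))) → ∃ i, a i = 0 ∧ 1 < da i

/-- The interval `(c,d)` follows a single sequence of branches under the first `n`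
iterates of `τ`. -/
def IsBranchSeq (T : PCT) (n : ℕ) (c d : ℝ) : Prop :=
  c < d ∧ ∀ k < n, ∃ i, T.τ^[k] '' Set.Ioo c d ⊆ Set.Ioo (T.a i) (T.b i)

/-- `(c,d)` is a maximal open interval on which `τ^n` is a single monotone branch,
i.e. an element of the partition `𝒫⁽ⁿ⁾`. -/
def IsBranchInterval (T : PCT) (n : ℕ) (c d : ℝ) : Prop :=
  IsBranchSeq T n c d ∧
    ∀ c' d', c' ≤ c → d ≤ d' → IsBranchSeq T n c' d' → c' = c ∧ d' = d

section ConvexSlope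

variable {f : ℝ → ℝ} {a b : ℝ}

lemma tendsto_slope_nhdsGT_of_tendsto_zero (hf : Tendsto f (𝓝[>] a) (𝓝 0)) {q : ℝ}
    (hq : q ≠ a) : Tendsto (fun u => slope f u q) (𝓝[>] a) (𝓝 (f q / (q - a))) := by
  simp_rw [slope_def_field]
  have hden : Tendsto (fun u => q - u) (𝓝[>] a) (𝓝 (q - a)) :=
    tendsto_const_nhds.sub (tendsto_nhdsWithin_of_tendsto_nhds tendsto_id)
  have hnum := (tendsto_const_nhds (x := f q)).sub hf
  rw [sub_zero] at hnum
  exact hnum.div hden (sub_ne_zero.2 hq)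

lemma ConvexOn.div_sub_le_slope_of_tendsto_zero (hf : ConvexOn ℝ (Ioo a b) f)
    (h0 : Tendsto f (𝓝[>] a) (𝓝 0)) {p q : ℝ} (hp : p ∈ Ioo a b) (hq : q ∈ Ioo a b)
    (hpq : p < q) : f q / (q - a) ≤ slope f p q := by
  refine le_of_tendsto (tendsto_slope_nhdsGT_of_tendsto_zero h0 (hp.1.trans hpq).ne') ?_
  filter_upwards [Ioo_mem_nhdsGT hp.1] with u hu
  have hu' : u ∈ Ioo a b := ⟨hu.1, hu.2.trans hp.2⟩
  rw [slope_comm, slope_comm f p]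
  exact hf.slope_mono hq ⟨hu', (hu.2.trans hpq).ne⟩ ⟨hp, hpq.ne⟩ hu.2.le

lemma ConvexOn.mul_sub_le_of_tendsto_deriv (hf : ConvexOn ℝ (Ioo a b) f)
    (hdiff : ∀ x ∈ Ioo a b, DifferentiableAt ℝ f x) (h0 : Tendsto f (𝓝[>] a) (𝓝 0))
    {d : ℝ} (hd : Tendsto (deriv f) (𝓝[>] a) (𝓝 d)) {q : ℝ} (hq : q ∈ Ioo a b) :
    d * (q - a) ≤ f q := by
  have hle : d ≤ f q / (q - a) := by
    refine le_of_tendsto_of_tendsto hd (tendsto_slope_nhdsGT_of_tendsto_zero h0 hq.1.ne') ?_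
    filter_upwards [Ioo_mem_nhdsGT hq.1] with u hu
    have hu' : u ∈ Ioo a b := ⟨hu.1, hu.2.trans hq.2⟩
    exact hf.deriv_le_slope hu' hq hu.2 (hdiff u hu')
  exact (le_div_iff₀ (sub_pos.2 hq.1)).1 hle

end ConvexSlope

lemma tendsto_one_of_le_mul_succ {σ r : ℕ → ℝ} (hσ : ∀ n, 0 < σ n) (hσ1 : ∀ n, σ n ≤ 1)
    (hr : ∀ n, r n ≤ 1) (hstep : ∀ n, σ n ≤ r n * σ (n + 1)) :
    Tendsto r atTop (𝓝 1) := by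
  have hmono : Monotone σ := monotone_nat_of_le_succ fun n =>
    (hstep n).trans (mul_le_of_le_one_left (hσ (n + 1)).le (hr n))
  have hlim := tendsto_atTop_ciSup hmono ⟨1, by rintro _ ⟨n, rfl⟩; exact hσ1 n⟩
  have hpos : 0 < ⨆ n, σ n := (hσ 0).trans_le (le_ciSup ⟨1, by rintro _ ⟨n, rfl⟩; exact hσ1 n⟩ 0)
  have hquot : Tendsto (fun n => σ n / σ (n + 1)) atTop (𝓝 1) := by
    have := hlim.div (hlim.comp (tendsto_add_atTop_nat 1)) hpos.ne'
    rwa [div_self hpos.ne'] at this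
  refine tendsto_of_tendsto_of_tendsto_of_le_of_le hquot tendsto_const_nhds (fun n => ?_) hr
  exact (div_le_iff₀ (hσ (n + 1))).2 (hstep n)

namespace PCT

variable (T : PCT)

lemma a_nonneg (i : ℕ) : 0 ≤ T.a i := by
  have h : closure (Ioo (T.a i) (T.b i)) ⊆ Ici 0 :=
    isClosed_Ici.closure_subset_iff.2 fun t ht => (T.sub i ht).1
  rw [closure_Ioo (T.lt i).ne] at h
  exact h (left_mem_Icc.2 (T.lt i).le)

lemma eq_of_a_mem_Ico {i j : ℕ} (h : T.a j ∈ Ico (T.a i) (T.b i)) : j = i := by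
  by_contra hne
  have hdisj := T.disj hne
  rw [Function.onFun, Set.disjoint_iff_inter_eq_empty, Ioo_inter_Ioo, Ioo_eq_empty_iff] at hdisj
  exact hdisj (max_lt_iff.2 ⟨lt_min (T.lt j) h.2, lt_min (h.1.trans_lt (T.lt j)) (T.lt i)⟩)

lemma a_ne_zero_of_accPt (hacc : AccPt (0 : ℝ) (𝓟 (range T.a))) (i : ℕ) : T.a i ≠ 0 := by
  intro hi
  obtain ⟨_, ⟨hlt, j, rfl⟩, hj⟩ := accPt_iff_nhds.1 hacc (Iio (T.b i))
    (Iio_mem_nhds (hi ▸ T.lt i))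
  have : j = i := T.eq_of_a_mem_Ico ⟨hi ▸ T.a_nonneg j, hlt⟩
  exact hj (this ▸ hi)

lemma exists_expansion_near_zero : ∃ δ > 0, ∃ ρ > 1, ∀ i, T.a i < δ → ρ < T.da i := by
  obtain ⟨ρ, hρ, hzero⟩ : ∃ ρ > 1, ∀ i, T.a i = 0 → ρ < T.da i := by
    by_cases hacc : AccPt (0 : ℝ) (𝓟 (range T.a))
    · exact ⟨2, one_lt_two, fun i hi => absurd hi (T.a_ne_zero_of_accPt hacc i)⟩
    · obtain ⟨i₀, h0, h1⟩ := T.expand hacc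
      refine ⟨(1 + T.da i₀) / 2, by linarith, fun i hi => ?_⟩
      obtain rfl : i = i₀ := T.eq_of_a_mem_Ico ⟨(hi.trans h0.symm).ge, hi ▸ h0 ▸ T.lt i₀⟩
      linarith
  have hfin : {i | T.da i ≤ ρ}.Finite := by
    refine (eventually_cofinite.1 (T.sum_inv.tendsto_cofinite_zero.eventually
      (gt_mem_nhds (one_div_pos.2 (zero_lt_one.trans hρ))))).subset fun i hi => ?_
    exact not_lt.2 (one_div_le_one_div_of_le (T.da_pos i) hi)
  have hδ : ∀ᶠ δ in 𝓝[>] (0 : ℝ), 0 < δ ∧ ∀ i ∈ {i | T.da i ≤ ρ}, δ ≤ T.a i := by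
    refine (eventually_mem_nhdsWithin (a := (0 : ℝ)) (s := Ioi 0)).and
      ((eventually_all_finite hfin).2 fun i hi => ?_)
    have hai : 0 < T.a i := (T.a_nonneg i).lt_of_ne fun h => (not_lt.2 hi) (hzero i h.symm)
    exact (eventually_le_nhds hai).filter_mono nhdsWithin_le_nhds
  obtain ⟨δ, hδ, hδa⟩ := hδ.exists
  exact ⟨δ, hδ, ρ, hρ, fun i hi => not_le.1 fun h => (hδa i h).not_gt hi⟩

lemma da_mul_sub_le {i : ℕ} {q : ℝ} (hq : q ∈ Ioo (T.a i) (T.b i)) :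
    T.da i * (q - T.a i) ≤ T.τ q :=
  (T.conv i).mul_sub_le_of_tendsto_deriv (T.diff i) (T.lim_zero i) (T.deriv_lim i) hq

lemma sub_mul_le_mul_sub {i : ℕ} {p q : ℝ} (hp : p ∈ Ioo (T.a i) (T.b i))
    (hq : q ∈ Ioo (T.a i) (T.b i)) (hpq : p < q) :
    (q - p) * T.τ q ≤ (q - T.a i) * (T.τ q - T.τ p) := by
  have h := (T.conv i).div_sub_le_slope_of_tendsto_zero (T.lim_zero i) hp hq hpq
  rw [slope_def_field, div_le_div_iff₀ (sub_pos.2 hq.1) (sub_pos.2 hpq)] at h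
  linarith

def endpointPreimages : Set ℝ := ⋃ n : ℕ, T.τ^[n] ⁻¹' (range T.a ∪ range T.b)

lemma endpoints_subset_endpointPreimages : range T.a ∪ range T.b ⊆ T.endpointPreimages :=
  subset_iUnion_of_subset 0 subset_rfl

lemma preimage_endpointPreimages_subset : T.τ ⁻¹' T.endpointPreimages ⊆ T.endpointPreimages := by
  intro w hw
  obtain ⟨n, hn⟩ := mem_iUnion.1 hw
  exact mem_iUnion.2 ⟨n + 1, by rwa [mem_preimage, Function.iterate_succ_apply]⟩

structure IsGap (x y : ℝ) : Prop where
  lt : x < y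
  subset_Icc : Icc x y ⊆ Icc 0 1
  disjoint : Disjoint (Icc x y) T.endpointPreimages

variable {T}

lemma IsGap.exists_branch {x y : ℝ} (h : T.IsGap x y) :
    ∃ i, Icc x y ⊆ Ioo (T.a i) (T.b i) := by
  obtain ⟨w, hw, hwU⟩ : (Icc x y ∩ ⋃ i, Ioo (T.a i) (T.b i)).Nonempty := by
    by_contra hempty
    have hsub : Icc x y ⊆ Icc 0 1 \ ⋃ i, Ioo (T.a i) (T.b i) := fun w hw =>
      ⟨h.subset_Icc hw, fun hU => hempty ⟨w, hw, hU⟩⟩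
    have hnull : volume (Icc x y) = 0 := measure_mono_null hsub T.null
    rw [Real.volume_Icc, ENNReal.ofReal_eq_zero] at hnull
    linarith [h.lt]
  obtain ⟨i, hwi⟩ := mem_iUnion.1 hwU
  have hnot : ∀ e ∈ range T.a ∪ range T.b, e ∉ Icc x y := fun e he hxy =>
    disjoint_left.1 h.disjoint hxy (T.endpoints_subset_endpointPreimages he)
  refine ⟨i, fun v hv => ⟨not_le.1 fun hva => ?_, not_le.1 fun hvb => ?_⟩⟩
  · exact hnot _ (Or.inl ⟨i, rfl⟩) ⟨hv.1.trans hva, hwi.1.le.trans hw.2⟩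
  · exact hnot _ (Or.inr ⟨i, rfl⟩) ⟨hw.1.trans hwi.2.le, hvb.trans hv.2⟩

lemma IsGap.image {x y : ℝ} (h : T.IsGap x y) : T.IsGap (T.τ x) (T.τ y) := by
  obtain ⟨i, hi⟩ := h.exists_branch
  have hcont : ContinuousOn T.τ (Icc x y) := fun w hw =>
    (T.diff i w (hi hw)).continuousAt.continuousWithinAt
  have hsurj : Icc (T.τ x) (T.τ y) ⊆ T.τ '' Icc x y := intermediate_value_Icc h.lt.le hcont
  refine ⟨T.mono i (hi (left_mem_Icc.2 h.lt.le)) (hi (right_mem_Icc.2 h.lt.le)) h.lt,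
    hsurj.trans ((T.maps_to.mono_left h.subset_Icc).image_subset), disjoint_left.2 ?_⟩
  rintro _ hw hwS
  obtain ⟨w', hw', rfl⟩ := hsurj hw
  exact disjoint_left.1 h.disjoint hw' (T.preimage_endpointPreimages_subset hwS)

lemma IsGap.iterate {x y : ℝ} (h : T.IsGap x y) (n : ℕ) :
    T.IsGap (T.τ^[n] x) (T.τ^[n] y) := by
  induction n with
  | zero => exact h
  | succ n ih => simpa only [Function.iterate_succ_apply'] using ih.image

lemma IsGap.left_pos {x y : ℝ} (h : T.IsGap x y) : 0 < x := by
  obtain ⟨i, hi⟩ := h.exists_branch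
  exact (T.a_nonneg i).trans_lt (hi (left_mem_Icc.2 h.lt.le)).1

lemma IsGap.right_le_one {x y : ℝ} (h : T.IsGap x y) : y ≤ 1 :=
  (h.subset_Icc (right_mem_Icc.2 h.lt.le)).2

lemma IsGap.le_mul_ratio {x y : ℝ} {i : ℕ} (h : T.IsGap x y)
    (hi : Icc x y ⊆ Ioo (T.a i) (T.b i)) :
    (y - x) / y ≤ (y - T.a i) / y * ((T.τ y - T.τ x) / T.τ y) := by
  have hx := hi (left_mem_Icc.2 h.lt.le)
  have hy := hi (right_mem_Icc.2 h.lt.le)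
  have hy0 : 0 < y := h.left_pos.trans h.lt
  have hτy : 0 < T.τ y := (mul_pos (T.da_pos i) (sub_pos.2 hy.1)).trans_le (T.da_mul_sub_le hy)
  rw [div_mul_div_comm, div_le_div_iff₀ hy0 (mul_pos hy0 hτy)]
  nlinarith [T.sub_mul_le_mul_sub hx hy h.lt]

lemma IsGap.tendsto_branch_ratio {x y : ℝ} (h : T.IsGap x y) {i : ℕ → ℕ}
    (hi : ∀ n, Icc (T.τ^[n] x) (T.τ^[n] y) ⊆ Ioo (T.a (i n)) (T.b (i n))) :
    Tendsto (fun n => (T.τ^[n] y - T.a (i n)) / T.τ^[n] y) atTop (𝓝 1) := by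
  have hy n : 0 < T.τ^[n] y := (h.iterate n).left_pos.trans (h.iterate n).lt
  refine tendsto_one_of_le_mul_succ (σ := fun n => (T.τ^[n] y - T.τ^[n] x) / T.τ^[n] y)
    (fun n => div_pos (sub_pos.2 (h.iterate n).lt) (hy n))
    (fun n => (div_le_one (hy n)).2 (sub_le_self _ (h.iterate n).left_pos.le))
    (fun n => (div_le_one (hy n)).2 (sub_le_self _ (T.a_nonneg _))) (fun n => ?_)
  simpa only [Function.iterate_succ_apply'] using (h.iterate n).le_mul_ratio (hi n)

lemma IsGap.eventually_expanding {x y : ℝ} (h : T.IsGap x y) :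
    ∃ c > 1, ∀ᶠ n in atTop, c * T.τ^[n] y ≤ T.τ^[n + 1] y := by
  choose i hi using fun n => (h.iterate n).exists_branch
  obtain ⟨δ, hδ, ρ, hρ, hexp⟩ := T.exists_expansion_near_zero
  have hr := h.tendsto_branch_ratio hi
  refine ⟨(1 + ρ) / 2, by linarith, ?_⟩
  filter_upwards [hr.eventually (lt_mem_nhds (sub_lt_self 1 hδ)),
    (hr.const_mul ρ).eventually (lt_mem_nhds (show (1 + ρ) / 2 < ρ * 1 by linarith))]
    with n hδn hρn
  have hY := hi n (right_mem_Icc.2 (h.iterate n).lt.le)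
  have hY0 : 0 < T.τ^[n] y := (h.iterate n).left_pos.trans (h.iterate n).lt
  rw [lt_div_iff₀ hY0] at hδn
  rw [← mul_div_assoc, lt_div_iff₀ hY0] at hρn
  have hsmall : T.a (i n) < δ := by nlinarith [(h.iterate n).right_le_one]
  calc (1 + ρ) / 2 * T.τ^[n] y ≤ ρ * (T.τ^[n] y - T.a (i n)) := hρn.le
    _ ≤ T.da (i n) * (T.τ^[n] y - T.a (i n)) :=
      mul_le_mul_of_nonneg_right (hexp _ hsmall).le (sub_pos.2 hY.1).le
    _ ≤ T.τ^[n + 1] y := by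
      rw [Function.iterate_succ_apply']
      exact T.da_mul_sub_le hY

theorem not_isGap (x y : ℝ) : ¬ T.IsGap x y := by
  intro h
  obtain ⟨c, hc, hgrow⟩ := h.eventually_expanding
  obtain ⟨N, hN⟩ := eventually_atTop.1 hgrow
  have hinf : Tendsto (fun k => T.τ^[k + N] y) atTop atTop := by
    refine tendsto_atTop_of_geom_le ?_ hc fun k => ?_
    · simpa using (h.iterate N).left_pos.trans (h.iterate N).lt
    · simpa only [add_right_comm k 1 N] using hN (k + N) (Nat.le_add_left N k)
  obtain ⟨k, hk⟩ := (hinf.eventually_gt_atTop 1).exists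
  exact hk.not_ge (h.iterate (k + N)).right_le_one

end PCT

/-- Proposition 2.1.8. Let `τ ∈ 𝒯`. The set
`S = ⋃ₙ τ⁻ⁿ({aᵢ, bᵢ : i ≥ 1})` of all preimages under iterates of `τ` of the partition
endpoints is dense in `[0,1]`. -/
theorem preimages_of_endpoints_dense (T : PCT) :
    Set.Icc (0:ℝ) 1 ⊆
      closure ((⋃ n : ℕ, T.τ^[n] ⁻¹' (Set.range T.a ∪ Set.range T.b)) ∩ Set.Icc 0 1) := by
  refine (closure_Ioo zero_ne_one).ge.trans (closure_minimal (fun z hz => ?_) isClosed_closure)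
  refine mem_closure_iff_nhds.2 fun U hU => ?_
  obtain ⟨l, u, hzlu, hlu⟩ :=
    mem_nhds_iff_exists_Ioo_subset.1 (inter_mem hU (Ioo_mem_nhds hz.1 hz.2))
  have hIcc : Icc ((l + z) / 2) ((z + u) / 2) ⊆ Ioo l u :=
    Icc_subset_Ioo (by linarith [hzlu.1]) (by linarith [hzlu.2])
  have hsub : Icc ((l + z) / 2) ((z + u) / 2) ⊆ U ∩ Icc 0 1 := fun w hw =>
    ⟨(hlu (hIcc hw)).1, Ioo_subset_Icc_self (hlu (hIcc hw)).2⟩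
  obtain ⟨w, hw, hwS⟩ := not_disjoint_iff.1 fun hdisj => T.not_isGap _ _
    ⟨by linarith [hzlu.1, hzlu.2], fun w hw => (hsub hw).2, hdisj⟩
  exact ⟨w, (hsub hw).1, hwS, (hsub hw).2⟩
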